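/- arXiv:1908.09356 — 2 statements merged into one kernel-verified Lean document; each statement's English description precedes it below -/
import Mathlib

section
/- Let G be a finite simple graph, let e = vw be an edge of G, set N[e] = N[v] ∪ N[w] (union of closed neighborhoods), and let u be a vertex with u ∉ N[e] such that every neighbor of u in G lies in N[e] (i.e., u is an isolated vertex of the induced subgraph G ∖ N[e]). Then the independence complex I(G − e) collapses onto I(G), where G − e is the graph obtained from G by removing the edge e. -/
/-! ## Abstract simplicial complexes, collapses, simple homotopy type -/

/-- `K` is obtained from `L` by removing a free pair `(σ, τ)`:
`σ ⊊ τ`, `|τ| = |σ| + 1`, and `τ` is the unique face of `K` strictly containing `σ`. -/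
def IsElemCollapse {V : Type} [DecidableEq V] (K L : Finset (Finset V)) : Prop :=
  ∃ σ τ : Finset V, σ ∈ K ∧ τ ∈ K ∧ σ ⊂ τ ∧ τ.card = σ.card + 1 ∧
    (∀ ρ ∈ K, σ ⊂ ρ → ρ = τ) ∧ L = K \ {σ, τ}

/-- `K` collapses onto `L` by a finite sequence of elementary collapses. -/
def Collapses {V : Type} [DecidableEq V] (K L : Finset (Finset V)) : Prop :=
  Relation.ReflTransGen (fun A B => IsElemCollapse A B) K L

/-- A finite abstract simplicial complex (with its ambient vertex type). -/
structure AbsCplx : Type 1 where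
  V : Type
  [deceq : DecidableEq V]
  faces : Finset (Finset V)
  empty_mem : ∅ ∈ faces
  down_closed : ∀ σ ∈ faces, ∀ τ ⊆ σ, τ ∈ faces

attribute [instance] AbsCplx.deceq

/-- Isomorphism of abstract simplicial complexes: an injection of the vertices
(the vertices being the elements occurring in faces) carrying faces exactly to faces. -/
def AbsCplx.Iso (K L : AbsCplx) : Prop :=
  ∃ f : K.V → L.V, Set.InjOn f {v | ({v} : Finset K.V) ∈ K.faces} ∧
    L.faces = K.faces.image (Finset.image f)

/-- One step: an isomorphism or an elementary collapse. -/
def AbsCplx.Step (K L : AbsCplx) : Prop :=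
  K.Iso L ∨ ∃ h : K.V = L.V, IsElemCollapse (h ▸ K.faces) L.faces

/-- Same simple homotopy type: finite zigzag of elementary collapses,
elementary expansions, and isomorphisms. -/
def SimpleHtpyEq (K L : AbsCplx) : Prop := Relation.EqvGen AbsCplx.Step K L

/-! ## Join, suspension, spheres, wedges, point -/

/-- Join of two complexes, on the disjoint union of the vertex types. -/
def AbsCplx.join (K L : AbsCplx) : AbsCplx where
  V := K.V ⊕ L.V
  faces := (K.faces ×ˢ L.faces).image fun p => p.1.disjSum p.2
  empty_mem := by
    refine Finset.mem_image.2 ⟨(∅, ∅), Finset.mem_product.2 ⟨K.empty_mem, L.empty_mem⟩, ?_⟩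
    ext x
    cases x <;> simp [Finset.inl_mem_disjSum, Finset.inr_mem_disjSum]
  down_closed := by
    intro σ hσ τ hτ
    rcases Finset.mem_image.1 hσ with ⟨p, hp, rfl⟩
    rcases Finset.mem_product.1 hp with ⟨hp1, hp2⟩
    refine Finset.mem_image.2
      ⟨(p.1.filter (fun v => Sum.inl v ∈ τ), p.2.filter (fun w => Sum.inr w ∈ τ)), ?_, ?_⟩
    · exact Finset.mem_product.2
        ⟨K.down_closed _ hp1 _ (Finset.filter_subset _ _),
         L.down_closed _ hp2 _ (Finset.filter_subset _ _)⟩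
    · ext x
      cases x with
      | inl v =>
        simp only [Finset.inl_mem_disjSum, Finset.mem_filter]
        exact ⟨fun h => h.2, fun h => ⟨Finset.inl_mem_disjSum.1 (hτ h), h⟩⟩
      | inr w =>
        simp only [Finset.inr_mem_disjSum, Finset.mem_filter]
        exact ⟨fun h => h.2, fun h => ⟨Finset.inr_mem_disjSum.1 (hτ h), h⟩⟩

/-- `∂Δ¹`: two vertices, no edge. -/
def sphere0 : AbsCplx where
  V := Bool
  faces := {∅, {false}, {true}}
  empty_mem := by decide
  down_closed := by decide

/-- The one point complex. -/
def ptCplx : AbsCplx where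
  V := Unit
  faces := {∅, {()}}
  empty_mem := by decide
  down_closed := by decide

/-- Suspension `ΣK = K * ∂Δ¹`. -/
def AbsCplx.susp (K : AbsCplx) : AbsCplx := K.join sphere0

/-- Iterated suspension `Σ^m K`. -/
def AbsCplx.nsusp (K : AbsCplx) (m : ℕ) : AbsCplx := AbsCplx.susp^[m] K

/-- `◊ⁿ`, the join of `n+1` copies of `∂Δ¹` (a triangulated `n`-sphere). -/
def diamond : ℕ → AbsCplx
  | 0 => sphere0
  | n + 1 => (diamond n).join sphere0

/-- A chosen base vertex of `◊ⁿ`. -/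
def diamondPt : (n : ℕ) → (diamond n).V
  | 0 => true
  | _ + 1 => Sum.inr true

/-- Wedge of `m` copies of `K`, identifying the chosen vertex `v₀` of each copy
to a single common vertex. -/
def wedge (m : ℕ) (K : AbsCplx) (v₀ : K.V) : AbsCplx where
  V := Option (Fin m × K.V)
  faces := insert ∅ ((Finset.univ (α := Fin m) ×ˢ K.faces).image fun p =>
    p.2.image fun v => if v = v₀ then none else some (p.1, v))
  empty_mem := Finset.mem_insert_self _ _
  down_closed := by
    intro σ hσ τ hτ
    rcases Finset.mem_insert.1 hσ with h | h
    · subst h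
      rw [Finset.subset_empty.1 hτ]
      exact Finset.mem_insert_self _ _
    · rcases Finset.mem_image.1 h with ⟨p, hp, rfl⟩
      rcases Finset.mem_product.1 hp with ⟨-, hp2⟩
      rcases Finset.subset_image_iff.1 hτ with ⟨τ₀, hτ₀, rfl⟩
      exact Finset.mem_insert.2 (Or.inr (Finset.mem_image.2
        ⟨(p.1, τ₀), Finset.mem_product.2 ⟨Finset.mem_univ _, K.down_closed _ hp2 _ hτ₀⟩, rfl⟩))

/-! ## Graphs and independence complexes -/

/-- The closed neighborhood `N[v]`. -/
def closedNbhd {V : Type} (G : SimpleGraph V) (v : V) : Set V := insert v {w | G.Adj v w}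

/-- The graph `G - e` obtained by removing the edge `vw`. -/
def deleteEdge {V : Type} [DecidableEq V] (G : SimpleGraph V) (v w : V) : SimpleGraph V where
  Adj a b := G.Adj a b ∧ s(a, b) ≠ s(v, w)
  symm := ⟨by
    intro a b h
    exact ⟨G.symm.symm _ _ h.1, by rw [Sym2.eq_swap]; exact h.2⟩⟩
  loopless := ⟨fun a h => G.loopless.irrefl a h.1⟩

instance {V : Type} [DecidableEq V] (G : SimpleGraph V) [DecidableRel G.Adj] (v w : V) :
    DecidableRel (deleteEdge G v w).Adj := fun a b =>
  inferInstanceAs (Decidable (G.Adj a b ∧ s(a, b) ≠ s(v, w)))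

/-- Independent finsets of `G` contained in the vertex set `s`
(the faces of the independence complex of the induced subgraph of `G` on `s`). -/
def indepFacesOn {V : Type} [Fintype V] [DecidableEq V] (G : SimpleGraph V)
    [DecidableRel G.Adj] (s : Finset V) : Finset (Finset V) :=
  s.powerset.filter fun t => ∀ a ∈ t, ∀ b ∈ t, ¬ G.Adj a b

/-- The faces of the independence complex `I(G)`. -/
def indepFaces {V : Type} [Fintype V] [DecidableEq V] (G : SimpleGraph V)
    [DecidableRel G.Adj] : Finset (Finset V) :=
  indepFacesOn G Finset.univ

/-- The independence complex `I(G)` as an abstract simplicial complex. -/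
def indepCplx {V : Type} [Fintype V] [DecidableEq V] (G : SimpleGraph V)
    [DecidableRel G.Adj] : AbsCplx where
  V := V
  faces := indepFaces G
  empty_mem := by simp [indepFaces, indepFacesOn]
  down_closed := by
    intro σ hσ τ hτ
    simp only [indepFaces, indepFacesOn, Finset.mem_filter, Finset.mem_powerset] at hσ ⊢
    exact ⟨hτ.trans hσ.1, fun a ha b hb => hσ.2 a (hτ ha) b (hτ hb)⟩

/-- Reduced Euler characteristic of a finite complex given by its set of faces. -/
def redEuler {V : Type} [DecidableEq V] (K : Finset (Finset V)) : ℤ :=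
  ∑ σ ∈ K.filter (fun σ => σ ≠ ∅), (-1 : ℤ) ^ (σ.card - 1)

/-! ## Grid graphs (0-indexed models of the 1-indexed graphs of the paper) -/

/-- The planar grid graph `P_{m,n}`. -/
def gridP (m n : ℕ) : SimpleGraph (Fin m × Fin n) :=
  SimpleGraph.fromRel fun u v =>
    |(u.1 : ℤ) - (v.1 : ℤ)| + |(u.2 : ℤ) - (v.2 : ℤ)| = 1

instance (m n : ℕ) : DecidableRel (gridP m n).Adj := fun a b =>
  decidable_of_iff _ (SimpleGraph.fromRel_adj _ a b).symm

/-- The cylindrical grid graph `C_{m,n}`: columns indexed cyclically. -/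
def gridC (m n : ℕ) : SimpleGraph (Fin m × Fin n) :=
  SimpleGraph.fromRel fun u v =>
    (u.1 = v.1 ∧ (v.2 : ℕ) = ((u.2 : ℕ) + 1) % n) ∨
    ((u.1 : ℕ) + 1 = (v.1 : ℕ) ∧ u.2 = v.2)

instance (m n : ℕ) : DecidableRel (gridC m n).Adj := fun a b =>
  decidable_of_iff _ (SimpleGraph.fromRel_adj _ a b).symm

/-- The Möbius grid graph `M_{m,n}`. -/
def gridM (m n : ℕ) : SimpleGraph (Fin m × Fin n) :=
  SimpleGraph.fromRel fun u v =>
    ((u.1 : ℕ) + 1 = (v.1 : ℕ) ∧ u.2 = v.2) ∨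
    (u.1 = v.1 ∧ (u.2 : ℕ) + 1 = (v.2 : ℕ)) ∨
    ((u.2 : ℕ) = n - 1 ∧ (v.2 : ℕ) = 0 ∧ (u.1 : ℕ) + (v.1 : ℕ) = m - 1)

instance (m n : ℕ) : DecidableRel (gridM m n).Adj := fun a b =>
  decidable_of_iff _ (SimpleGraph.fromRel_adj _ a b).symm

/-- The cylindrical hexagonal grid graph `C^H_{1,n}`: obtained from `C_{2,2n}`
by deleting the vertical edges in the even columns. -/
def gridCH (n : ℕ) : SimpleGraph (Fin 2 × Fin (2 * n)) :=
  SimpleGraph.fromRel fun u v =>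
    (u.1 = v.1 ∧ (v.2 : ℕ) = ((u.2 : ℕ) + 1) % (2 * n)) ∨
    ((u.1 : ℕ) + 1 = (v.1 : ℕ) ∧ u.2 = v.2 ∧ ¬ Even (u.2 : ℕ))

instance (n : ℕ) : DecidableRel (gridCH n).Adj := fun a b =>
  decidable_of_iff _ (SimpleGraph.fromRel_adj _ a b).symm

/-- `M^H_{1,n}`: obtained from `M_{2,2n}` by deleting the vertical edges in the
odd columns (`1`-indexed), i.e. the even columns in this `0`-indexed model. -/
def gridMH (n : ℕ) : SimpleGraph (Fin 2 × Fin (2 * n)) :=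
  SimpleGraph.fromRel fun u v =>
    ((u.1 : ℕ) + 1 = (v.1 : ℕ) ∧ u.2 = v.2 ∧ ¬ Even (u.2 : ℕ)) ∨
    (u.1 = v.1 ∧ (u.2 : ℕ) + 1 = (v.2 : ℕ)) ∨
    ((u.2 : ℕ) = 2 * n - 1 ∧ (v.2 : ℕ) = 0 ∧ (u.1 : ℕ) + (v.1 : ℕ) = 1)

instance (n : ℕ) : DecidableRel (gridMH n).Adj := fun a b =>
  decidable_of_iff _ (SimpleGraph.fromRel_adj _ a b).symm

/-! The edge `vw` is present in `G` but not in `G − e`, so the faces of `I(G − e)` missing from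
`I(G)` are exactly those containing both `v` and `w`. They form an upward closed family, and
toggling `u` pairs them off: a neighbour of `u` lies in `N[e]` but is neither `v` nor `w`, so it is
adjacent in `G − e` to `v` or to `w` and hence cannot lie in such a face. A family of faces that is
upward closed in `K` and paired off by toggling a vertex can be collapsed away, removing at each
step the pair `(σ, σ ∪ {u})` with `σ` of maximal size. -/

section Collapse

variable {V : Type} [DecidableEq V]

def IsPairedBy (u : V) (S : Finset (Finset V)) : Prop :=
  ∀ ρ : Finset V, u ∉ ρ → (ρ ∈ S ↔ insert u ρ ∈ S)

namespace IsPairedBy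

variable {u : V} {S : Finset (Finset V)}

lemma exists_notMem (hS : IsPairedBy u S) (hne : S.Nonempty) : ∃ σ ∈ S, u ∉ σ := by
  obtain ⟨ρ, hρ⟩ := hne
  by_cases hu : u ∈ ρ
  · refine ⟨ρ.erase u, (hS _ (Finset.notMem_erase u ρ)).2 ?_, Finset.notMem_erase u ρ⟩
    rwa [Finset.insert_erase hu]
  · exact ⟨ρ, hρ, hu⟩

lemma sdiff_pair (hS : IsPairedBy u S) {σ : Finset V} (hσ : u ∉ σ) :
    IsPairedBy u (S \ {σ, insert u σ}) := by
  intro ρ hρ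
  have hne : insert u ρ ≠ σ := fun h => hσ (h ▸ Finset.mem_insert_self u ρ)
  have hne' : ρ ≠ insert u σ := fun h => hρ (h ▸ Finset.mem_insert_self u σ)
  have hinj : insert u ρ = insert u σ ↔ ρ = σ :=
    ⟨fun h => by rw [← Finset.erase_insert hρ, h, Finset.erase_insert hσ], fun h => h ▸ rfl⟩
  simp only [Finset.mem_sdiff, Finset.mem_insert, Finset.mem_singleton, hS ρ hρ, hinj,
    hne, hne', false_or, or_false]

end IsPairedBy

variable {K S : Finset (Finset V)} {u : V}

lemma isElemCollapse_of_isPairedBy (hSK : S ⊆ K)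
    (hup : ∀ σ ∈ S, ∀ ρ ∈ K, σ ⊆ ρ → ρ ∈ S) (hS : IsPairedBy u S)
    {σ : Finset V} (hσS : σ ∈ S) (huσ : u ∉ σ)
    (hmax : ∀ ρ ∈ S, u ∉ ρ → ρ.card ≤ σ.card) :
    IsElemCollapse K (K \ {σ, insert u σ}) := by
  refine ⟨σ, insert u σ, hSK hσS, hSK ((hS σ huσ).1 hσS), Finset.ssubset_insert huσ,
    Finset.card_insert_of_notMem huσ, fun ρ hρK hσρ => ?_, rfl⟩
  have hρS : ρ ∈ S := hup σ hσS ρ hρK hσρ.subset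
  by_cases huρ : u ∈ ρ
  · have hρ' : ρ.erase u ∈ S := (hS _ (Finset.notMem_erase u ρ)).2 (by rwa [Finset.insert_erase huρ])
    have hσρ' : σ ⊆ ρ.erase u := Finset.subset_erase.2 ⟨hσρ.subset, huσ⟩
    have hσ_eq : σ = ρ.erase u :=
      Finset.eq_of_subset_of_card_le hσρ' (hmax _ hρ' (Finset.notMem_erase u ρ))
    rw [hσ_eq, Finset.insert_erase huρ]
  · exact absurd (hmax ρ hρS huρ) (not_le.2 (Finset.card_lt_card hσρ))

theorem collapses_sdiff_of_isPairedBy (hSK : S ⊆ K)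
    (hup : ∀ σ ∈ S, ∀ ρ ∈ K, σ ⊆ ρ → ρ ∈ S) (hS : IsPairedBy u S) :
    Collapses K (K \ S) := by
  induction S using Finset.strongInduction generalizing K with
  | H S ih =>
  rcases S.eq_empty_or_nonempty with rfl | hne
  · rw [Finset.sdiff_empty]
    exact Relation.ReflTransGen.refl
  obtain ⟨σ, hσT, hσmax⟩ := (S.filter (u ∉ ·)).exists_max_image Finset.card <| by
    obtain ⟨σ, hσ, huσ⟩ := hS.exists_notMem hne
    exact ⟨σ, Finset.mem_filter.2 ⟨hσ, huσ⟩⟩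
  obtain ⟨hσS, huσ⟩ := Finset.mem_filter.1 hσT
  have hpair : {σ, insert u σ} ⊆ S := by
    simp [Finset.insert_subset_iff, hσS, (hS σ huσ).1 hσS]
  have hstep : IsElemCollapse K (K \ {σ, insert u σ}) :=
    isElemCollapse_of_isPairedBy hSK hup hS hσS huσ
      fun ρ hρ huρ => hσmax ρ (Finset.mem_filter.2 ⟨hρ, huρ⟩)
  have hrest := ih (S \ {σ, insert u σ}) (Finset.sdiff_ssubset hpair (by simp))
    (Finset.sdiff_subset_sdiff hSK le_rfl)
    (fun τ hτ ρ hρ hτρ => Finset.mem_sdiff.2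
      ⟨hup τ (Finset.sdiff_subset hτ) ρ (Finset.sdiff_subset hρ) hτρ, (Finset.mem_sdiff.1 hρ).2⟩)
    (hS.sdiff_pair huσ)
  rw [sdiff_sdiff_sdiff_cancel_right hpair] at hrest
  exact Relation.ReflTransGen.head hstep hrest

end Collapse

section DeleteEdge

variable {V : Type} [DecidableEq V] {G : SimpleGraph V} {v w : V}

lemma deleteEdge_adj_left {x : V} (hvx : G.Adj v x) (hxw : x ≠ w) :
    (deleteEdge G v w).Adj v x :=
  ⟨hvx, fun h => hxw (Sym2.congr_right.1 h)⟩

lemma deleteEdge_adj_right {x : V} (hwx : G.Adj w x) (hxv : x ≠ v) :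
    (deleteEdge G v w).Adj w x :=
  ⟨hwx, fun h => hxv (Sym2.congr_right.1 (h.trans Sym2.eq_swap))⟩

lemma adj_deleteEdge_of_adj_of_mem_closedNbhd {u x : V}
    (hu : u ∉ closedNbhd G v ∪ closedNbhd G w) (hux : G.Adj u x)
    (hx : x ∈ closedNbhd G v ∪ closedNbhd G w) :
    (deleteEdge G v w).Adj v x ∨ (deleteEdge G v w).Adj w x := by
  simp only [closedNbhd, Set.mem_union, Set.mem_insert_iff, Set.mem_ofPred_eq, not_or] at hu hx
  obtain ⟨⟨-, hvu⟩, -, hwu⟩ := hu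
  have hxv : x ≠ v := by rintro rfl; exact hvu hux.symm
  have hxw : x ≠ w := by rintro rfl; exact hwu hux.symm
  rcases hx with (rfl | hvx) | (rfl | hwx)
  · exact absurd rfl hxv
  · exact Or.inl (deleteEdge_adj_left hvx hxw)
  · exact absurd rfl hxw
  · exact Or.inr (deleteEdge_adj_right hwx hxv)

end DeleteEdge

section IndependenceComplex

variable {V : Type} [Fintype V] [DecidableEq V]

lemma mem_indepFaces_iff (G : SimpleGraph V) [DecidableRel G.Adj] {σ : Finset V} :
    σ ∈ indepFaces G ↔ ∀ a ∈ σ, ∀ b ∈ σ, ¬ G.Adj a b := by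
  simp [indepFaces, indepFacesOn]

lemma insert_mem_indepFaces_iff (G : SimpleGraph V) [DecidableRel G.Adj] {u : V}
    {σ : Finset V} :
    insert u σ ∈ indepFaces G ↔ σ ∈ indepFaces G ∧ ∀ x ∈ σ, ¬ G.Adj u x := by
  simp only [mem_indepFaces_iff, Finset.mem_insert, forall_eq_or_imp, G.irrefl,
    not_false_eq_true, true_and]
  exact ⟨fun h => ⟨fun a ha => (h.2 a ha).2, h.1⟩,
    fun h => ⟨h.2, fun a ha => ⟨fun hau => h.2 a ha hau.symm, h.1 a ha⟩⟩⟩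

variable {G : SimpleGraph V} [DecidableRel G.Adj] {v w : V}

lemma indepFaces_deleteEdge_sdiff (hvw : G.Adj v w) :
    indepFaces (deleteEdge G v w) \ (indepFaces (deleteEdge G v w)).filter (fun σ => v ∈ σ ∧ w ∈ σ)
      = indepFaces G := by
  ext σ
  simp only [Finset.mem_sdiff, Finset.mem_filter, mem_indepFaces_iff, not_and]
  constructor
  · rintro ⟨hind, hnot⟩ a ha b hb hab
    have hs : s(a, b) = s(v, w) := by_contra fun h => hind a ha b hb ⟨hab, h⟩
    rcases Sym2.eq_iff.1 hs with ⟨rfl, rfl⟩ | ⟨rfl, rfl⟩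
    · exact hnot hind ha hb
    · exact hnot hind hb ha
  · intro hind
    exact ⟨fun a ha b hb hab => hind a ha b hb hab.1, fun _ hv hw => hind v hv w hw hvw⟩

lemma isPairedBy_deleteEdge {u : V} (huv : u ≠ v) (huw : u ≠ w)
    (hnbr : ∀ x, G.Adj u x → (deleteEdge G v w).Adj v x ∨ (deleteEdge G v w).Adj w x) :
    IsPairedBy u ((indepFaces (deleteEdge G v w)).filter (fun σ => v ∈ σ ∧ w ∈ σ)) := by
  intro ρ hρ
  simp only [Finset.mem_filter, insert_mem_indepFaces_iff, Finset.mem_insert, huv.symm,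
    huw.symm, false_or]
  refine ⟨fun ⟨hind, hv, hw⟩ => ⟨⟨hind, fun x hx hux => ?_⟩, hv, hw⟩, fun h => ⟨h.1.1, h.2⟩⟩
  rw [mem_indepFaces_iff] at hind
  rcases hnbr x hux.1 with hvx | hwx
  · exact hind v hv x hx hvx
  · exact hind w hw x hx hwx

end IndependenceComplex

/-- If `e = vw` is an edge of `G`, `u ∉ N[e] = N[v] ∪ N[w]` and
every neighbor of `u` lies in `N[e]` (so `u` is isolated in `G ∖ N[e]`), then
`I(G − e)` collapses onto `I(G)`. -/
theorem indepFaces_deleteEdge_collapses {V : Type} [Fintype V] [DecidableEq V]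
    (G : SimpleGraph V) [DecidableRel G.Adj] (v w u : V)
    (hvw : G.Adj v w)
    (hu : u ∉ closedNbhd G v ∪ closedNbhd G w)
    (hnbr : ∀ x : V, G.Adj u x → x ∈ closedNbhd G v ∪ closedNbhd G w) :
    Collapses (indepFaces (deleteEdge G v w)) (indepFaces G) := by
  have huv : u ≠ v := fun h => hu (Or.inl (h ▸ Set.mem_insert u _))
  have huw : u ≠ w := fun h => hu (Or.inr (h ▸ Set.mem_insert u _))
  rw [← indepFaces_deleteEdge_sdiff hvw]
  refine collapses_sdiff_of_isPairedBy (Finset.filter_subset _ _)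
    (fun σ hσ ρ hρ hσρ => Finset.mem_filter.2 ⟨hρ, ?_⟩)
    (isPairedBy_deleteEdge huv huw
      fun x hux => adj_deleteEdge_of_adj_of_mem_closedNbhd hu hux (hnbr x hux))
  obtain ⟨-, hv, hw⟩ := Finset.mem_filter.1 hσ
  exact ⟨hσρ hv, hσρ hw⟩
end

section
/- Let G be a finite simple graph with an edge uv, and let H be the graph obtained from G by replacing the edge uv with a path of length four through three new vertices: V(H) = V(G) ⊔ {x, y, z} and E(H) = (E(G) ∖ {uv}) ∪ {ux, xy, yz, zv}. Then I(H) and Σ I(G) have the same simple homotopy type. -/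
/-- The graph `H` obtained from `G` by replacing the edge `uv` with a path of
length four `u - x - y - z - v` through three new vertices `x = inr 0`,
`y = inr 1`, `z = inr 2`. -/
def pathReplace {V : Type} (G : SimpleGraph V) (u v : V) : SimpleGraph (V ⊕ Fin 3) :=
  SimpleGraph.fromRel fun a b =>
    (∃ p q : V, a = Sum.inl p ∧ b = Sum.inl q ∧ G.Adj p q ∧ s(p, q) ≠ s(u, v)) ∨
    (a = Sum.inl u ∧ b = Sum.inr 0) ∨
    (a = Sum.inr 0 ∧ b = Sum.inr 1) ∨
    (a = Sum.inr 1 ∧ b = Sum.inr 2) ∨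
    (a = Sum.inr 2 ∧ b = Sum.inl v)

instance {V : Type} [Fintype V] [DecidableEq V] (G : SimpleGraph V) [DecidableRel G.Adj]
    (u v : V) : DecidableRel (pathReplace G u v).Adj := fun a b =>
  decidable_of_iff _ (SimpleGraph.fromRel_adj _ a b).symm

/-!
Write `x, y, z` for the new vertices and `Γ₃ = G ⊔ (x - y - z)`, `Γ₂ = Γ₃ + zv`,
`Γ₁ = Γ₂ + ux = H + uv`. An upward closed family of faces that is matched with itself by
toggling one vertex `p` can be removed by elementary collapses of the pairs `(σ, σ ∪ {p})`.
For independence complexes this removes the faces containing a set `A` as soon as every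
neighbour of `p ∉ A` is adjacent to `A`. Hence `I(H) ↘ I(H + uv)` (toggle `y`),
`I(Γ₂) ↘ I(Γ₁)` (toggle `z`, using `uv ∈ G`), `I(Γ₃) ↘ I(Γ₂)` (toggle `x`), and
`I(Γ₃)` collapses onto its subcomplex avoiding `z` (toggle `x`, as `N(x) = {y} ⊆ N(z)`).
That subcomplex is `I(G ⊔ K₂) = I(G) * I(K₂) = I(G) * ∂Δ¹ = Σ I(G)`.
-/

open Finset

section Collapse

variable {W : Type} [DecidableEq W]

theorem IsElemCollapse.subset {K L : Finset (Finset W)} (h : IsElemCollapse K L) : L ⊆ K := by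
  obtain ⟨_, _, _, _, _, _, _, rfl⟩ := h
  exact sdiff_subset

theorem IsElemCollapse.downClosed {K L : Finset (Finset W)} (h : IsElemCollapse K L)
    (hK : ∀ σ ∈ K, ∀ τ ⊆ σ, τ ∈ K) : ∀ σ ∈ L, ∀ τ ⊆ σ, τ ∈ L := by
  obtain ⟨σ₀, τ₀, -, -, hστ, -, hfree, rfl⟩ := h
  intro ρ hρ π hπ
  simp only [mem_sdiff, mem_insert, mem_singleton, not_or] at hρ ⊢
  obtain ⟨hρK, hρσ, hρτ⟩ := hρ
  have above : ¬ σ₀ ⊂ ρ := fun h => hρτ (hfree ρ hρK h)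
  refine ⟨hK ρ hρK π hπ, ?_, ?_⟩
  · rintro rfl
    exact above (hπ.ssubset_of_ne (Ne.symm hρσ))
  · rintro rfl
    exact above (hστ.trans_subset hπ)

theorem Collapses.subset {K L : Finset (Finset W)} (h : Collapses K L) : L ⊆ K := by
  induction h with
  | refl => exact Subset.rfl
  | tail _ hstep ih => exact hstep.subset.trans ih

theorem Collapses.downClosed {K L : Finset (Finset W)} (h : Collapses K L)
    (hK : ∀ σ ∈ K, ∀ τ ⊆ σ, τ ∈ K) : ∀ σ ∈ L, ∀ τ ⊆ σ, τ ∈ L := by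
  induction h with
  | refl => exact hK
  | tail _ hstep ih => exact hstep.downClosed ih

theorem SimpleHtpyEq.symm {K L : AbsCplx} (h : SimpleHtpyEq K L) : SimpleHtpyEq L K :=
  Relation.EqvGen.symm _ _ h

theorem SimpleHtpyEq.trans {K L M : AbsCplx} (h₁ : SimpleHtpyEq K L) (h₂ : SimpleHtpyEq L M) :
    SimpleHtpyEq K M :=
  Relation.EqvGen.trans _ _ _ h₁ h₂

instance : Trans SimpleHtpyEq SimpleHtpyEq SimpleHtpyEq := ⟨SimpleHtpyEq.trans⟩

infix:25 " ≃ˢ " => SimpleHtpyEq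

theorem AbsCplx.Iso.simpleHtpyEq {K L : AbsCplx} (h : K.Iso L) : SimpleHtpyEq K L :=
  Relation.EqvGen.rel _ _ (.inl h)

theorem AbsCplx.step_of_isElemCollapse {K L : Finset (Finset W)} (h : IsElemCollapse K L)
    (hK₀ : ∅ ∈ K) (hK : ∀ σ ∈ K, ∀ τ ⊆ σ, τ ∈ K) (hL₀ : ∅ ∈ L) (hL : ∀ σ ∈ L, ∀ τ ⊆ σ, τ ∈ L) :
    AbsCplx.Step ⟨W, K, hK₀, hK⟩ ⟨W, L, hL₀, hL⟩ :=
  .inr ⟨rfl, h⟩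

theorem simpleHtpyEq_of_collapses {K L : Finset (Finset W)} (h : Collapses K L)
    (hK₀ : ∅ ∈ K) (hK : ∀ σ ∈ K, ∀ τ ⊆ σ, τ ∈ K) (hL₀ : ∅ ∈ L) :
    SimpleHtpyEq ⟨W, K, hK₀, hK⟩ ⟨W, L, hL₀, h.downClosed hK⟩ := by
  induction h using Relation.ReflTransGen.head_induction_on with
  | refl => exact .refl _
  | head hstep hrest ih =>
    have hM₀ := Collapses.subset hrest hL₀
    have hM := hstep.downClosed hK
    exact SimpleHtpyEq.trans (.rel _ _ (AbsCplx.step_of_isElemCollapse hstep ..)) (ih hM₀ hM)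

theorem Finset.eq_or_eq_insert_of_erase_eq {ρ σ : Finset W} {p : W} (hpσ : p ∉ σ)
    (h : ρ.erase p = σ) : ρ = σ ∨ ρ = insert p σ := by
  by_cases hpρ : p ∈ ρ
  · exact .inr ((erase_eq_iff_eq_insert hpρ hpσ).1 h)
  · exact .inl ((erase_eq_of_notMem hpρ).symm.trans h)

structure IsToggleUpperSet (K D : Finset (Finset W)) (p : W) : Prop where
  subset : D ⊆ K
  upward_closed : ∀ σ ∈ D, ∀ τ ∈ K, σ ⊆ τ → τ ∈ D
  insert_mem : ∀ σ ∈ D, insert p σ ∈ D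
  erase_mem : ∀ σ ∈ D, σ.erase p ∈ D

namespace IsToggleUpperSet

variable {K D : Finset (Finset W)} {p : W} {σ : Finset W}

theorem isElemCollapse (h : IsToggleUpperSet K D p) (hσ : Maximal (· ∈ D.filter (p ∉ ·)) σ) :
    IsElemCollapse K (K \ {σ, insert p σ}) := by
  obtain ⟨hσD, hpσ⟩ := mem_filter.1 hσ.prop
  refine ⟨σ, insert p σ, h.subset hσD, h.subset (h.insert_mem σ hσD), ssubset_insert hpσ,
    card_insert_of_notMem hpσ, fun ρ hρK hσρ => ?_, rfl⟩
  -- `ρ.erase p` is a `p`-free member of `D` above `σ`, hence equal to `σ`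
  have hρD := h.upward_closed σ hσD ρ hρK hσρ.subset
  have hle : σ ⊆ ρ.erase p := subset_erase.2 ⟨hσρ.subset, hpσ⟩
  have heq : ρ.erase p = σ :=
    hσ.eq_of_ge (mem_filter.2 ⟨h.erase_mem ρ hρD, notMem_erase p ρ⟩) hle
  exact (eq_or_eq_insert_of_erase_eq hpσ heq).resolve_left hσρ.ne'

theorem sdiff_pair (h : IsToggleUpperSet K D p) (hpσ : p ∉ σ) :
    IsToggleUpperSet (K \ {σ, insert p σ}) (D \ {σ, insert p σ}) p := by
  have pair_of_erase : ∀ ρ : Finset W, ρ.erase p = σ → ρ ∈ ({σ, insert p σ} : Finset _) := by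
    intro ρ hρ
    simpa using eq_or_eq_insert_of_erase_eq hpσ hρ
  refine ⟨sdiff_subset_sdiff h.subset Subset.rfl, ?_, ?_, ?_⟩
  · intro ρ hρ τ hτ hρτ
    exact mem_sdiff.2 ⟨h.upward_closed ρ (mem_sdiff.1 hρ).1 τ (mem_sdiff.1 hτ).1 hρτ,
      (mem_sdiff.1 hτ).2⟩
  · intro ρ hρ
    refine mem_sdiff.2 ⟨h.insert_mem ρ (mem_sdiff.1 hρ).1, fun hmem => (mem_sdiff.1 hρ).2 ?_⟩
    apply pair_of_erase
    rcases mem_insert.1 hmem with h' | h'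
    · exact absurd (h' ▸ mem_insert_self p ρ) hpσ
    · rw [← erase_insert_eq_erase, mem_singleton.1 h', erase_insert hpσ]
  · intro ρ hρ
    refine mem_sdiff.2 ⟨h.erase_mem ρ (mem_sdiff.1 hρ).1, fun hmem => (mem_sdiff.1 hρ).2 ?_⟩
    rcases mem_insert.1 hmem with h' | h'
    · exact pair_of_erase ρ h'
    · exact absurd (mem_singleton.1 h' ▸ notMem_erase p ρ) (by simp)

theorem collapses (h : IsToggleUpperSet K D p) : Collapses K (K \ D) := by
  induction hn : D.card using Nat.strong_induction_on generalizing K D with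
  | _ n ih =>
  obtain rfl | ⟨τ, hτ⟩ := D.eq_empty_or_nonempty
  · rw [sdiff_empty]
    exact .refl
  obtain ⟨σ, hσ⟩ := (D.filter (p ∉ ·)).exists_maximal
    ⟨τ.erase p, mem_filter.2 ⟨h.erase_mem τ hτ, notMem_erase p τ⟩⟩
  obtain ⟨hσD, hpσ⟩ := mem_filter.1 hσ.prop
  have hpair : {σ, insert p σ} ⊆ D :=
    insert_subset hσD (singleton_subset_iff.2 (h.insert_mem σ hσD))
  have hrest := ih _ (hn ▸ card_lt_card (sdiff_ssubset hpair (insert_nonempty _ _)))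
    (h.sdiff_pair hpσ) rfl
  rw [sdiff_sdiff_sdiff_cancel_right hpair] at hrest
  exact .head (h.isElemCollapse hσ) hrest

end IsToggleUpperSet

end Collapse

open SimpleGraph

section Independence

variable {V : Type} [Fintype V] [DecidableEq V]

theorem mem_indepFacesOn {Γ : SimpleGraph V} [DecidableRel Γ.Adj] {s σ : Finset V} :
    σ ∈ indepFacesOn Γ s ↔ σ ⊆ s ∧ ∀ a ∈ σ, ∀ b ∈ σ, ¬ Γ.Adj a b := by
  rw [indepFacesOn, mem_filter, mem_powerset]

theorem mem_indepFaces {Γ : SimpleGraph V} [DecidableRel Γ.Adj] {σ : Finset V} :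
    σ ∈ indepFaces Γ ↔ ∀ a ∈ σ, ∀ b ∈ σ, ¬ Γ.Adj a b := by
  simp [indepFaces, mem_indepFacesOn]

def indepCplxOn (Γ : SimpleGraph V) [DecidableRel Γ.Adj] (s : Finset V) : AbsCplx where
  V := V
  faces := indepFacesOn Γ s
  empty_mem := mem_indepFacesOn.2 ⟨empty_subset s, by simp⟩
  down_closed σ hσ τ hτ := by
    rw [mem_indepFacesOn] at hσ ⊢
    exact ⟨hτ.trans hσ.1, fun a ha b hb => hσ.2 a (hτ ha) b (hτ hb)⟩

theorem simpleHtpyEq_indepCplxOn_of_collapses {Γ Γ' : SimpleGraph V} [DecidableRel Γ.Adj]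
    [DecidableRel Γ'.Adj] {s t : Finset V} (h : Collapses (indepFacesOn Γ s) (indepFacesOn Γ' t)) :
    SimpleHtpyEq (indepCplxOn Γ s) (indepCplxOn Γ' t) :=
  simpleHtpyEq_of_collapses h _ _ _

section Collapse

variable {Γ : SimpleGraph V} [DecidableRel Γ.Adj]

theorem isToggleUpperSet_indepFaces_filter_superset {A : Finset V} {p : V} (hpA : p ∉ A)
    (hN : ∀ w, Γ.Adj p w → ∃ a ∈ A, Γ.Adj a w) :
    IsToggleUpperSet (indepFaces Γ) ((indepFaces Γ).filter (A ⊆ ·)) p where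
  subset := filter_subset _ _
  upward_closed σ hσ τ hτ hστ := mem_filter.2 ⟨hτ, (mem_filter.1 hσ).2.trans hστ⟩
  insert_mem σ hσ := by
    obtain ⟨hσI, hAσ⟩ := mem_filter.1 hσ
    rw [mem_indepFaces] at hσI
    have hp : ∀ w ∈ σ, ¬ Γ.Adj p w := fun w hw hpw => by
      obtain ⟨a, ha, haw⟩ := hN w hpw
      exact hσI a (hAσ ha) w hw haw
    refine mem_filter.2 ⟨mem_indepFaces.2 ?_, hAσ.trans (subset_insert p σ)⟩
    simp only [mem_insert, forall_eq_or_imp]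
    exact ⟨⟨Γ.loopless.irrefl p, hp⟩, fun a ha =>
      ⟨fun hap => hp a ha hap.symm, hσI a ha⟩⟩
  erase_mem σ hσ := by
    obtain ⟨hσI, hAσ⟩ := mem_filter.1 hσ
    exact mem_filter.2 ⟨(indepCplx Γ).down_closed σ hσI _ (erase_subset p σ),
      subset_erase.2 ⟨hAσ, hpA⟩⟩

theorem collapses_indepFaces_filter_not_superset {A : Finset V} {p : V} (hpA : p ∉ A)
    (hN : ∀ w, Γ.Adj p w → ∃ a ∈ A, Γ.Adj a w) :
    Collapses (indepFaces Γ) ((indepFaces Γ).filter fun σ => ¬ A ⊆ σ) := by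
  rw [filter_not]
  exact (isToggleUpperSet_indepFaces_filter_superset hpA hN).collapses

theorem indepFaces_filter_not_pair_subset {a b : V} (hab : a ≠ b) {Γ' : SimpleGraph V}
    [DecidableRel Γ'.Adj] (hΓ' : Γ ⊔ edge a b = Γ') :
    (indepFaces Γ).filter (fun σ => ¬ {a, b} ⊆ σ) = indepFaces Γ' := by
  subst hΓ'
  ext σ
  simp only [mem_filter, mem_indepFaces, sup_adj, edge_adj, insert_subset_iff,
    singleton_subset_iff]
  constructor
  · rintro ⟨hσ, hab'⟩ c hc d hd (hcd | ⟨hcd | hcd, -⟩)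
    · exact hσ c hc d hd hcd
    · exact hab' ⟨hcd.1 ▸ hc, hcd.2 ▸ hd⟩
    · exact hab' ⟨hcd.2 ▸ hd, hcd.1 ▸ hc⟩
  · intro hσ
    exact ⟨fun c hc d hd hcd => hσ c hc d hd (.inl hcd),
      fun ⟨ha, hb⟩ => hσ a ha b hb (.inr ⟨.inl ⟨rfl, rfl⟩, hab⟩)⟩

theorem collapses_indepFaces_sup_edge {a b p : V} (hab : a ≠ b) (hpa : p ≠ a) (hpb : p ≠ b)
    (hN : ∀ w, Γ.Adj p w → Γ.Adj a w ∨ Γ.Adj b w) {Γ' : SimpleGraph V} [DecidableRel Γ'.Adj]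
    (hΓ' : Γ ⊔ edge a b = Γ') :
    Collapses (indepFaces Γ) (indepFaces Γ') := by
  rw [← indepFaces_filter_not_pair_subset hab hΓ']
  refine collapses_indepFaces_filter_not_superset (p := p) (by simp [hpa, hpb]) fun w hw => ?_
  simpa using hN w hw

theorem collapses_indepFaces_erase {a p : V} (hpa : p ≠ a)
    (hN : ∀ w, Γ.Adj p w → Γ.Adj a w) :
    Collapses (indepFaces Γ) (indepFacesOn Γ (univ.erase a)) := by
  have h := collapses_indepFaces_filter_not_superset (A := {a}) (by simpa using hpa)
    fun w hw => ⟨a, mem_singleton_self a, hN w hw⟩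
  convert h using 1
  ext σ
  simp [mem_indepFacesOn, mem_indepFaces, subset_erase, and_comm]

end Collapse

end Independence

section Join

variable {V W : Type} [Fintype V] [DecidableEq V] [Fintype W] [DecidableEq W]
  {G : SimpleGraph V} [DecidableRel G.Adj] {H : SimpleGraph W} [DecidableRel H.Adj]

theorem indepFaces_sum [DecidableRel (G ⊕g H).Adj] :
    indepFaces (G ⊕g H) = (indepFaces G ×ˢ indepFaces H).image fun p => p.1.disjSum p.2 := by
  ext σ
  simp only [mem_image, mem_product, mem_indepFaces, Prod.exists]
  constructor
  · intro hσ
    refine ⟨σ.toLeft, σ.toRight, ⟨?_, ?_⟩, toLeft_disjSum_toRight⟩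
    · intro a ha b hb hab
      exact hσ _ (mem_toLeft.1 ha) _ (mem_toLeft.1 hb) (sum_adj_inl.2 hab)
    · intro a ha b hb hab
      exact hσ _ (mem_toRight.1 ha) _ (mem_toRight.1 hb) (sum_adj_inr.2 hab)
  · rintro ⟨s, t, ⟨hs, ht⟩, rfl⟩ (a | a) ha (b | b) hb <;>
      simp_all

theorem indepCplx_sum [DecidableRel (G ⊕g H).Adj] :
    indepCplx (G ⊕g H) = (indepCplx G).join (indepCplx H) := by
  unfold indepCplx AbsCplx.join
  congr 1
  exact indepFaces_sum

theorem sphere0_eq_indepCplx_top : sphere0 = indepCplx (⊤ : SimpleGraph Bool) := by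
  unfold sphere0 indepCplx
  congr 1
  decide

theorem indepFaces_image_of_embedding {Γ' : SimpleGraph W} [DecidableRel Γ'.Adj]
    {Γ : SimpleGraph V} [DecidableRel Γ.Adj] (f : Γ' ↪g Γ) :
    (indepFaces Γ').image (image f) = indepFacesOn Γ (univ.image f) := by
  ext σ
  simp only [mem_image, mem_indepFaces, mem_indepFacesOn]
  constructor
  · rintro ⟨τ, hτ, rfl⟩
    refine ⟨image_subset_image (subset_univ τ), ?_⟩
    simp only [mem_image]
    rintro _ ⟨a, ha, rfl⟩ _ ⟨b, hb, rfl⟩ hab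
    exact hτ a ha b hb (f.map_adj_iff.1 hab)
  · rintro ⟨hσ, hind⟩
    obtain ⟨τ, -, rfl⟩ := subset_image_iff.1 hσ
    exact ⟨τ, fun a ha b hb hab => hind _ (mem_image_of_mem f ha) _ (mem_image_of_mem f hb)
      (f.map_adj_iff.2 hab), rfl⟩

theorem indepCplx_iso_indepCplxOn_range {Γ' : SimpleGraph W} [DecidableRel Γ'.Adj]
    {Γ : SimpleGraph V} [DecidableRel Γ.Adj] (f : Γ' ↪g Γ) :
    (indepCplx Γ').Iso (indepCplxOn Γ (univ.image f)) :=
  ⟨f, f.injective.injOn, (indepFaces_image_of_embedding f).symm⟩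

end Join

section PathReplace

variable {V : Type} {G : SimpleGraph V} {u v : V}

theorem pathReplace_sup_edge (huv : G.Adj u v) :
    pathReplace G u v ⊔ edge (Sum.inl u) (Sum.inl v) =
      (G ⊕g pathGraph 3) ⊔ edge (Sum.inr 2) (Sum.inl v) ⊔ edge (Sum.inl u) (Sum.inr 0) := by
  ext (a | i) (b | j)
  · simp only [pathReplace, ne_eq, Sym2.eq, Sym2.rel_iff', Prod.mk.injEq, Prod.swap_prod_mk,
      not_or, not_and, exists_and_left, Fin.isValue, sup_adj, fromRel_adj, Sum.inl.injEq,
      exists_eq_left', reduceCtorEq, and_false, and_self, false_and, or_self, or_false, edge_adj,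
      sum_adj]
    constructor
    · rintro (⟨-, ⟨h, -⟩ | ⟨h, -⟩⟩ | ⟨⟨rfl, rfl⟩ | ⟨rfl, rfl⟩, -⟩)
      exacts [h, h.symm, huv, huv.symm]
    · intro h
      by_cases he : a = u ∧ b = v ∨ a = v ∧ b = u
      · exact .inr ⟨he, h.ne⟩
      · exact .inl ⟨h.ne, .inl ⟨h, fun hu hv => he (.inl ⟨hu, hv⟩),
          fun hv hu => he (.inr ⟨hv, hu⟩)⟩⟩
  · fin_cases j <;> simp [pathReplace, edge_adj]
  · fin_cases i <;> simp [pathReplace, edge_adj]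
  · fin_cases i <;> fin_cases j <;> simp [pathReplace, edge_adj, pathGraph_adj]

def topBoolEmbeddingPathGraph : (⊤ : SimpleGraph Bool) ↪g pathGraph 3 where
  toFun b := if b then 1 else 0
  inj' := by decide
  map_rel_iff' {a b} := by cases a <;> cases b <;> simp [pathGraph_adj]

theorem image_univ_sum_topBoolEmbeddingPathGraph [Fintype V] [DecidableEq V] :
    univ.image (Embedding.sum (Embedding.refl (G := G)) topBoolEmbeddingPathGraph) =
      univ.erase (Sum.inr 2) := by
  ext (a | i)
  · simp
  · fin_cases i <;> simp [topBoolEmbeddingPathGraph]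

theorem susp_iso_indepCplxOn_erase [Fintype V] [DecidableEq V] [DecidableRel G.Adj]
    [DecidableRel (G ⊕g pathGraph 3).Adj] :
    (indepCplx G).susp.Iso (indepCplxOn (G ⊕g pathGraph 3) (univ.erase (Sum.inr 2))) := by
  classical
  rw [AbsCplx.susp, sphere0_eq_indepCplx_top, ← indepCplx_sum,
    ← image_univ_sum_topBoolEmbeddingPathGraph]
  exact indepCplx_iso_indepCplxOn_range _

end PathReplace

/-- Theorem 1.1. If `H` is obtained from `G` by replacing an edge `uv`
with a length four path `u - x - y - z - v`, then `I(H) ≃ˢ Σ I(G)`. -/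
theorem pathReplace_simpleHtpyEq_susp {V : Type} [Fintype V] [DecidableEq V]
    (G : SimpleGraph V) [DecidableRel G.Adj] (u v : V) (huv : G.Adj u v) :
    SimpleHtpyEq (indepCplx (pathReplace G u v)) ((indepCplx G).susp) := by
  classical
  set Γ₃ := G ⊕g pathGraph 3
  set Γ₂ := Γ₃ ⊔ edge (Sum.inr 2) (Sum.inl v)
  set Γ₁ := Γ₂ ⊔ edge (Sum.inl u) (Sum.inr 0)
  have h₀ : Collapses (indepFaces (pathReplace G u v)) (indepFaces Γ₁) :=
    collapses_indepFaces_sup_edge (p := Sum.inr 1) (by simp [huv.ne]) (by simp) (by simp)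
      (by rintro (w | j) hw <;> [skip; fin_cases j] <;> simp_all [pathReplace])
      (pathReplace_sup_edge huv)
  have h₁ : Collapses (indepFaces Γ₂) (indepFaces Γ₁) :=
    collapses_indepFaces_sup_edge (p := Sum.inr 2) (by simp) (by simp) (by simp)
      (by rintro (w | j) hw <;> [skip; fin_cases j] <;> simp_all [Γ₂, Γ₃, edge_adj, pathGraph_adj])
      rfl
  have h₂ : Collapses (indepFaces Γ₃) (indepFaces Γ₂) :=
    collapses_indepFaces_sup_edge (p := Sum.inr 0) (by simp) (by simp) (by simp)
      (by rintro (w | j) hw <;> [skip; fin_cases j] <;> simp_all [Γ₃, pathGraph_adj]) rfl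
  have h₃ : Collapses (indepFaces Γ₃) (indepFacesOn Γ₃ (univ.erase (Sum.inr 2))) :=
    collapses_indepFaces_erase (p := Sum.inr 0) (by simp)
      (by rintro (w | j) hw <;> [skip; fin_cases j] <;> simp_all [Γ₃, pathGraph_adj])
  calc indepCplx (pathReplace G u v)
    _ ≃ˢ indepCplx Γ₁ := simpleHtpyEq_indepCplxOn_of_collapses h₀
    _ ≃ˢ indepCplx Γ₂ := (simpleHtpyEq_indepCplxOn_of_collapses h₁).symm
    _ ≃ˢ indepCplx Γ₃ := (simpleHtpyEq_indepCplxOn_of_collapses h₂).symm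
    _ ≃ˢ indepCplxOn Γ₃ (univ.erase (Sum.inr 2)) := simpleHtpyEq_indepCplxOn_of_collapses h₃
    _ ≃ˢ (indepCplx G).susp := susp_iso_indepCplxOn_erase.simpleHtpyEq.symm
end
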